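/- arXiv:2312.08589 — 3 statements merged into one kernel-verified Lean document; each statement's English description precedes it below -/
import Mathlib

section
/- Let L be the proper loss with Savage/Schervish representation L(p,y) = −F(p) − ⟨∇F(p), y − p⟩ for p ∈ Δ^k, y ∈ ℝ^k, and define the risk R(g) = E[L(g(X), Y)]. Then the risk decomposes as R(g) = CE_F(g) + REF_F(g), i.e. E[L(g(X),Y)] = E[D_F(E[Y|g(X)], g(X))] + E[−F(E[Y|g(X)])]. -/
open MeasureTheory ProbabilityTheory
open scoped RealInnerProductSpace

/-!
Write `Z = E[Y | g(X)]`. Pointwise, `D_F(Z, g) - F(Z) = -F(g) - ⟨∇F(g), Z - g⟩`, which is the loss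
at `g` with the label `Y` replaced by `Z`. Since `∇F(g(X))` is bounded and `g(X)`-measurable, the
tower property gives `E⟨∇F(g(X)), Y⟩ = E⟨∇F(g(X)), Z⟩`, so replacing `Y` by `Z` does not change
the risk. Everything is integrable because `g(X)`, `Y` and (by conditional Jensen for the closed
convex simplex) `Z` take values in the compact simplex.
-/

/-- Bregman divergence generated by `F`. -/
noncomputable def breg {k : ℕ} (F : EuclideanSpace ℝ (Fin k) → ℝ)
    (p q : EuclideanSpace ℝ (Fin k)) : ℝ :=
  F p - F q - ⟪gradient F q, p - q⟫

/-- The probability simplex in `ℝ^k`. -/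
def simplexE (k : ℕ) : Set (EuclideanSpace ℝ (Fin k)) :=
  {p | (∀ i, 0 ≤ p i) ∧ ∑ i, p i = 1}

theorem measurable_gradient {E : Type*} [NormedAddCommGroup E] [InnerProductSpace ℝ E]
    [CompleteSpace E] [MeasurableSpace E] [BorelSpace E] (F : E → ℝ) :
    Measurable (gradient F) :=
  (InnerProductSpace.toDual ℝ E).symm.continuous.measurable.comp (measurable_fderiv ℝ F)

theorem simplexE_eq_preimage_stdSimplex (k : ℕ) :
    simplexE k = EuclideanSpace.equiv (Fin k) ℝ ⁻¹' stdSimplex ℝ (Fin k) :=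
  rfl

theorem isCompact_simplexE (k : ℕ) : IsCompact (simplexE k) := by
  rw [simplexE_eq_preimage_stdSimplex]
  exact (EuclideanSpace.equiv (Fin k) ℝ).toHomeomorph.isCompact_preimage.mpr
    (isCompact_stdSimplex _ _)

theorem convex_simplexE (k : ℕ) : Convex ℝ (simplexE k) := by
  rw [simplexE_eq_preimage_stdSimplex]
  exact (convex_stdSimplex ℝ (Fin k)).linear_preimage (EuclideanSpace.equiv (Fin k) ℝ).toLinearMap

theorem single_one_mem_simplexE {k : ℕ} (i : Fin k) :
    EuclideanSpace.single i (1 : ℝ) ∈ simplexE k := by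
  refine ⟨fun j => ?_, ?_⟩ <;> simp [apply_ite]

theorem breg_add_neg {k : ℕ} (F : EuclideanSpace ℝ (Fin k) → ℝ) (p q : EuclideanSpace ℝ (Fin k)) :
    breg F p q + -F p = -F q - ⟪gradient F q, p - q⟫ := by
  unfold breg
  ring

section

variable {Ω E : Type*} {m mΩ : MeasurableSpace Ω} {μ : Measure Ω}

theorem MeasureTheory.Integrable.of_ae_mem_isCompact [NormedAddCommGroup E] [IsFiniteMeasure μ]
    {K : Set E} (hK : IsCompact K) {Z : Ω → E} (hZ : AEStronglyMeasurable Z μ)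
    (hZK : ∀ᵐ ω ∂μ, Z ω ∈ K) : Integrable Z μ :=
  let ⟨C, hC⟩ := hK.isBounded.exists_norm_le
  .of_bound hZ C (hZK.mono fun _ hω => hC _ hω)

variable [NormedAddCommGroup E] [InnerProductSpace ℝ E]

theorem integrable_inner_of_bdd_left {W Y : Ω → E} {C : ℝ} (hW : AEStronglyMeasurable W μ)
    (hWC : ∀ᵐ ω ∂μ, ‖W ω‖ ≤ C) (hY : Integrable Y μ) :
    Integrable (fun ω => ⟪W ω, Y ω⟫) μ :=
  (innerSL ℝ).integrable_of_bilin_of_bdd_left C hW hWC hY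

variable [CompleteSpace E]

theorem integral_inner_condExp (hm : m ≤ mΩ) [IsFiniteMeasure μ] {W Y : Ω → E}
    (hW : StronglyMeasurable[m] W) {C : ℝ} (hWC : ∀ᵐ ω ∂μ, ‖W ω‖ ≤ C) (hY : Integrable Y μ) :
    ∫ ω, ⟪W ω, (μ[Y | m]) ω⟫ ∂μ = ∫ ω, ⟪W ω, Y ω⟫ ∂μ := calc
  _ = ∫ ω, (μ[fun ω => ⟪W ω, Y ω⟫ | m]) ω ∂μ :=
    integral_congr_ae (condExp_stronglyMeasurable_bilin_of_bound (innerSL ℝ) hm hW hY C hWC).symm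
  _ = _ := integral_condExp hm

theorem integral_sub_inner_sub_condExp (hm : m ≤ mΩ) [IsFiniteMeasure μ] {a : Ω → ℝ}
    {W G Y : Ω → E} (ha : Integrable a μ) (hW : StronglyMeasurable[m] W) {C : ℝ}
    (hWC : ∀ᵐ ω ∂μ, ‖W ω‖ ≤ C) (hG : StronglyMeasurable[m] G) (hGi : Integrable G μ)
    (hY : Integrable Y μ) :
    ∫ ω, (a ω - ⟪W ω, Y ω - G ω⟫) ∂μ = ∫ ω, (a ω - ⟪W ω, (μ[Y | m]) ω - G ω⟫) ∂μ := by
  have hcond : μ[Y - G | m] =ᵐ[μ] μ[Y | m] - G := by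
    filter_upwards [condExp_sub hY hGi m] with ω hω
    rw [hω, condExp_of_stronglyMeasurable hm hG hGi]
  have hinner : ∫ ω, ⟪W ω, Y ω - G ω⟫ ∂μ = ∫ ω, ⟪W ω, (μ[Y | m]) ω - G ω⟫ ∂μ := calc
    _ = ∫ ω, ⟪W ω, (μ[Y - G | m]) ω⟫ ∂μ := (integral_inner_condExp hm hW hWC (hY.sub hGi)).symm
    _ = _ := integral_congr_ae (hcond.mono fun ω hω => by simp only [hω, Pi.sub_apply])
  have hWm : AEStronglyMeasurable W μ := (hW.mono hm).aestronglyMeasurable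
  have hYG : Integrable (fun ω => ⟪W ω, Y ω - G ω⟫) μ :=
    integrable_inner_of_bdd_left hWm hWC (hY.sub hGi)
  have hZG : Integrable (fun ω => ⟪W ω, (μ[Y | m]) ω - G ω⟫) μ :=
    integrable_inner_of_bdd_left hWm hWC (integrable_condExp.sub hGi)
  rw [integral_sub ha hYG, integral_sub ha hZG, hinner]

theorem integral_breg_add_integral_neg {k : ℕ} {F : EuclideanSpace ℝ (Fin k) → ℝ}
    {G Z : Ω → EuclideanSpace ℝ (Fin k)} (hFG : Integrable (fun ω => F (G ω)) μ)
    (hFZ : Integrable (fun ω => F (Z ω)) μ)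
    (hWZG : Integrable (fun ω => ⟪gradient F (G ω), Z ω - G ω⟫) μ) :
    (∫ ω, breg F (Z ω) (G ω) ∂μ) + ∫ ω, -F (Z ω) ∂μ
      = ∫ ω, (-F (G ω) - ⟪gradient F (G ω), Z ω - G ω⟫) ∂μ := calc
  _ = ∫ ω, (breg F (Z ω) (G ω) + -F (Z ω)) ∂μ :=
    (integral_add ((hFZ.sub hFG).sub hWZG) hFZ.neg).symm
  _ = _ := by simp only [breg_add_neg]

theorem integral_loss_eq_integral_breg_condExp_add (hm : m ≤ mΩ) [IsFiniteMeasure μ] {k : ℕ}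
    {G Y : Ω → EuclideanSpace ℝ (Fin k)} {F : EuclideanSpace ℝ (Fin k) → ℝ}
    (hG : Measurable[m] G) (hY : Measurable Y) (hGs : ∀ ω, G ω ∈ simplexE k)
    (hYs : ∀ ω, Y ω ∈ simplexE k) (hF : Continuous F)
    (hgF : ContinuousOn (gradient F) (simplexE k)) :
    ∫ ω, (-F (G ω) - ⟪gradient F (G ω), Y ω - G ω⟫) ∂μ
      = (∫ ω, breg F ((μ[Y | m]) ω) (G ω) ∂μ) + ∫ ω, -F ((μ[Y | m]) ω) ∂μ := by
  have hK := isCompact_simplexE k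
  have hYi := Integrable.of_ae_mem_isCompact (μ := μ) hK hY.aestronglyMeasurable (ae_of_all _ hYs)
  have hGi := Integrable.of_ae_mem_isCompact (μ := μ) hK (hG.mono hm le_rfl).aestronglyMeasurable
    (ae_of_all _ hGs)
  have hZs : ∀ᵐ ω ∂μ, (μ[Y | m]) ω ∈ simplexE k :=
    (convex_simplexE k).condExp_mem hm hYi hK.isClosed (ae_of_all _ hYs)
  have hFK := hK.image hF
  have hFG := Integrable.of_ae_mem_isCompact hFK (hF.comp_aestronglyMeasurable hGi.1)
    (ae_of_all _ fun ω => ⟨_, hGs ω, rfl⟩)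
  have hFZ := Integrable.of_ae_mem_isCompact hFK
    (hF.comp_aestronglyMeasurable integrable_condExp.1) (hZs.mono fun _ hω => ⟨_, hω, rfl⟩)
  obtain ⟨C, hC⟩ := hK.exists_bound_of_continuousOn hgF
  have hW : StronglyMeasurable[m] (fun ω => gradient F (G ω)) :=
    ((measurable_gradient F).comp hG).stronglyMeasurable
  have hWC : ∀ᵐ ω ∂μ, ‖gradient F (G ω)‖ ≤ C := ae_of_all _ fun ω => hC _ (hGs ω)
  rw [integral_sub_inner_sub_condExp (a := fun ω => -F (G ω)) hm hFG.neg hW hWC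
    hG.stronglyMeasurable hGi hYi]
  exact (integral_breg_add_integral_neg hFG hFZ (integrable_inner_of_bdd_left
    (hW.mono hm).aestronglyMeasurable hWC (integrable_condExp.sub hGi))).symm

end

theorem risk_eq_calibration_add_refinement_general
    {Ω 𝒳 : Type*} [MeasurableSpace Ω] [MeasurableSpace 𝒳]
    (μ : Measure Ω) [IsProbabilityMeasure μ] {k : ℕ}
    (X : Ω → 𝒳) (Y : Ω → EuclideanSpace ℝ (Fin k))
    (g : 𝒳 → EuclideanSpace ℝ (Fin k))
    (F : EuclideanSpace ℝ (Fin k) → ℝ)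
    (hX : Measurable X) (hY : Measurable Y) (hg : Measurable g)
    (hYoh : ∀ ω, ∃ i, Y ω = EuclideanSpace.single i 1)
    (hgs : ∀ x, g x ∈ simplexE k)
    (hF : ConvexOn ℝ Set.univ F)
    (hgFc : ContinuousOn (gradient F) (simplexE k)) :
    ∫ ω, (-(F (g (X ω))) - ⟪gradient F (g (X ω)), Y ω - g (X ω)⟫) ∂μ
      = (∫ ω, breg F
            ((μ[Y | MeasurableSpace.comap (fun ω' => g (X ω')) inferInstance]) ω)
            (g (X ω)) ∂μ)
        + ∫ ω, -(F ((μ[Y | MeasurableSpace.comap (fun ω' => g (X ω')) inferInstance]) ω)) ∂μ := by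
  have hYs : ∀ ω, Y ω ∈ simplexE k := fun ω => by
    obtain ⟨i, hi⟩ := hYoh ω
    exact hi ▸ single_one_mem_simplexE i
  exact integral_loss_eq_integral_breg_condExp_add (hg.comp hX).comap_le
    (Measurable.of_comap_le le_rfl) hY (fun ω => hgs (X ω)) hYs
    (continuousOn_univ.mp (hF.continuousOn isOpen_univ)) hgFc

/-- the risk of a proper loss with Savage/Schervish representation
decomposes into proper calibration error plus refinement. -/
theorem risk_eq_calibration_add_refinement
    {Ω 𝒳 : Type*} [MeasurableSpace Ω] [MeasurableSpace 𝒳]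
    (μ : Measure Ω) [IsProbabilityMeasure μ] {k : ℕ}
    (X : Ω → 𝒳) (Y : Ω → EuclideanSpace ℝ (Fin k))
    (g : 𝒳 → EuclideanSpace ℝ (Fin k))
    (F : EuclideanSpace ℝ (Fin k) → ℝ)
    (hX : Measurable X) (hY : Measurable Y) (hg : Measurable g)
    (hYoh : ∀ ω, ∃ i, Y ω = EuclideanSpace.single i 1)
    (hgs : ∀ x, g x ∈ simplexE k)
    (U : Set (EuclideanSpace ℝ (Fin k))) (hU : IsOpen U) (hUs : simplexE k ⊆ U)
    (hF : ConvexOn ℝ Set.univ F)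
    (hFd : ∀ p ∈ U, DifferentiableAt ℝ F p)
    (hFc : ContinuousOn F (simplexE k))
    (hgFc : ContinuousOn (gradient F) (simplexE k)) :
    ∫ ω, (-(F (g (X ω))) - ⟪gradient F (g (X ω)), Y ω - g (X ω)⟫) ∂μ
      = (∫ ω, breg F
            ((μ[Y | MeasurableSpace.comap (fun ω' => g (X ω')) inferInstance]) ω)
            (g (X ω)) ∂μ)
        + ∫ ω, -(F ((μ[Y | MeasurableSpace.comap (fun ω' => g (X ω')) inferInstance]) ω)) ∂μ :=
  risk_eq_calibration_add_refinement_general μ X Y g F hX hY hg hYoh hgs hF hgFc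
end

section
/- One-vs-Rest risk identity for a single class: let F : [0,1] → ℝ be convex and differentiable with the binary proper loss L(p,y) = −F(p) − F'(p)(y − p), and let g_i : 𝒳 → [0,1] be a measurable binary classifier for class i. Writing q_i := E[1{Y=i} | g_i(X)] for the conditional probability of class i given g_i(X) and π_i := μ(Y = i), the One-vs-Rest risk R_i(g_i) := E[L(g_i(X), 1{Y=i})] satisfies R_i(g_i) = E[D_F(q_i, g_i(X))] − E[D_F(q_i, π_i)] − F(π_i). -/
/-!
The loss `L(p, y) = -F(p) - F'(p)(y - p)` is affine in the label `y`, with a slope `F'(g)` that is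
measurable with respect to `σ(g)`. Hence, by the pull-out property, replacing the label `1{Y=i}` by
its conditional expectation `q` does not change the risk. Pointwise `L(g, q) = D_F(q, g) - F(q)`,
and `E[D_F(q, π)] = E[F(q)] - F(π)` since the tangent term at `π = E[q]` integrates to zero.
-/

open MeasureTheory ProbabilityTheory

/-- One-dimensional Bregman divergence generated by `F`. -/
noncomputable def bregR (F : ℝ → ℝ) (x y : ℝ) : ℝ :=
  F x - F y - deriv F y * (x - y)

open Set

noncomputable def properLoss (F : ℝ → ℝ) (p y : ℝ) : ℝ :=
  -F p - deriv F p * (y - p)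

lemma properLoss_eq_bregR_sub (F : ℝ → ℝ) (p y : ℝ) : properLoss F p y = bregR F y p - F y := by
  unfold properLoss bregR
  ring

section

variable {Ω : Type*} {m mΩ : MeasurableSpace Ω} {μ : Measure Ω}

lemma ContinuousOn.integrable_comp_of_ae_mem {α E : Type*} [TopologicalSpace α]
    [MeasurableSpace α] [OpensMeasurableSpace α] [NormedAddCommGroup E] [IsFiniteMeasure μ]
    {K : Set α} {F : α → E} (hF : ContinuousOn F K) (hK : IsCompact K) (hK' : MeasurableSet K)
    {h : Ω → α} (hh : AEMeasurable h μ) (h_mem : ∀ᵐ ω ∂μ, h ω ∈ K) :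
    Integrable (fun ω ↦ F (h ω)) μ := by
  have hF_meas : AEStronglyMeasurable F (μ.map h) := by
    rw [← Measure.restrict_eq_self_of_ae_mem ((ae_map_iff hh hK').2 h_mem)]
    exact hF.aestronglyMeasurable_of_isCompact hK hK'
  obtain ⟨C, hC⟩ := hK.exists_bound_of_continuousOn hF
  exact .of_bound (hF_meas.comp_aemeasurable hh) C (h_mem.mono fun ω hω ↦ hC _ hω)

lemma integral_mul_condExp (hm : m ≤ mΩ) [SigmaFinite (μ.trim hm)] {b y : Ω → ℝ}
    (hb : AEStronglyMeasurable[m] b μ) (hby : Integrable (b * y) μ) (hy : Integrable y μ) :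
    ∫ ω, b ω * y ω ∂μ = ∫ ω, b ω * μ[y | m] ω ∂μ :=
  (integral_condExp hm).symm.trans
    (integral_congr_ae (condExp_mul_of_aestronglyMeasurable_left hb hby hy))

lemma integral_bregR_integral [IsProbabilityMeasure μ] {F : ℝ → ℝ} {q : Ω → ℝ}
    (hq : Integrable q μ) (hFq : Integrable (fun ω ↦ F (q ω)) μ) :
    ∫ ω, bregR F (q ω) (∫ ω, q ω ∂μ) ∂μ = ∫ ω, F (q ω) ∂μ - F (∫ ω, q ω ∂μ) := by
  set π := ∫ ω, q ω ∂μ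
  have h_centered : Integrable (fun ω ↦ deriv F π * (q ω - π)) μ :=
    (hq.sub (integrable_const _)).const_mul _
  have h_tangent_int : Integrable (fun ω ↦ F π + deriv F π * (q ω - π)) μ :=
    (integrable_const _).add h_centered
  have h_tangent : ∫ ω, (F π + deriv F π * (q ω - π)) ∂μ = F π := by
    rw [integral_add (integrable_const _) h_centered, integral_const_mul,
      integral_sub hq (integrable_const _)]
    simp [π]
  calc ∫ ω, bregR F (q ω) π ∂μ = ∫ ω, (F (q ω) - (F π + deriv F π * (q ω - π))) ∂μ := by
        congr with ω; unfold bregR; ring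
    _ = ∫ ω, F (q ω) ∂μ - F π := by
        rw [integral_sub hFq h_tangent_int, h_tangent]

lemma integrable_properLoss {F : ℝ → ℝ} {g z : Ω → ℝ} (hFg : Integrable (fun ω ↦ F (g ω)) μ)
    (hg : Integrable g μ) (hz : Integrable z μ)
    (hF'g : AEStronglyMeasurable (fun ω ↦ deriv F (g ω)) μ) {C : ℝ}
    (hC : ∀ᵐ ω ∂μ, ‖deriv F (g ω)‖ ≤ C) :
    Integrable (fun ω ↦ properLoss F (g ω) (z ω)) μ :=
  hFg.neg.sub ((hz.sub hg).bdd_mul hF'g hC)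

lemma integral_properLoss_condExp (hm : m ≤ mΩ) [IsFiniteMeasure μ] {F : ℝ → ℝ} {g y : Ω → ℝ}
    (hg : Measurable[m] g) (hFg : Integrable (fun ω ↦ F (g ω)) μ) (hg_int : Integrable g μ)
    (hy : Integrable y μ) {C : ℝ} (hC : ∀ᵐ ω ∂μ, ‖deriv F (g ω)‖ ≤ C) :
    ∫ ω, properLoss F (g ω) (y ω) ∂μ = ∫ ω, properLoss F (g ω) (μ[y | m] ω) ∂μ := by
  have hF'g : AEStronglyMeasurable[m] (fun ω ↦ deriv F (g ω)) μ :=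
    ((measurable_deriv F).comp hg).aestronglyMeasurable
  have hF'g_mul : ∀ {z : Ω → ℝ}, Integrable z μ → Integrable (fun ω ↦ deriv F (g ω) * z ω) μ :=
    fun hz ↦ hz.bdd_mul (hF'g.mono hm) hC
  have hL : ∀ {z : Ω → ℝ}, Integrable z μ → Integrable (fun ω ↦ properLoss F (g ω) (z ω)) μ :=
    fun hz ↦ integrable_properLoss hFg hg_int hz (hF'g.mono hm) hC
  rw [← sub_eq_zero, ← integral_sub (hL hy) (hL integrable_condExp)]
  calc ∫ ω, (properLoss F (g ω) (y ω) - properLoss F (g ω) (μ[y | m] ω)) ∂μ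
      = ∫ ω, (deriv F (g ω) * μ[y | m] ω - deriv F (g ω) * y ω) ∂μ := by
        congr with ω; unfold properLoss; ring
    _ = 0 := by
        rw [integral_sub (hF'g_mul integrable_condExp) (hF'g_mul hy),
          integral_mul_condExp hm hF'g (hF'g_mul hy) hy, sub_self]

theorem integral_properLoss_eq {a b : ℝ} (hm : m ≤ mΩ) [IsProbabilityMeasure μ] {F : ℝ → ℝ}
    (hFc : ContinuousOn F (Icc a b)) (hF'c : ContinuousOn (deriv F) (Icc a b)) {g y : Ω → ℝ}
    (hg : Measurable[m] g) (hg_mem : ∀ᵐ ω ∂μ, g ω ∈ Icc a b) (hy : Integrable y μ)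
    (hy_mem : ∀ᵐ ω ∂μ, y ω ∈ Icc a b) :
    ∫ ω, properLoss F (g ω) (y ω) ∂μ
      = ∫ ω, bregR F (μ[y | m] ω) (g ω) ∂μ - ∫ ω, bregR F (μ[y | m] ω) (∫ ω, y ω ∂μ) ∂μ
        - F (∫ ω, y ω ∂μ) := by
  set q := μ[y | m]
  have hg_meas : Measurable g := hg.mono hm le_rfl
  have hq_mem : ∀ᵐ ω ∂μ, q ω ∈ Icc a b :=
    (convex_Icc a b).condExp_mem hm hy isClosed_Icc hy_mem
  have hFq : Integrable (fun ω ↦ F (q ω)) μ :=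
    hFc.integrable_comp_of_ae_mem isCompact_Icc measurableSet_Icc
      integrable_condExp.aemeasurable hq_mem
  have hFg : Integrable (fun ω ↦ F (g ω)) μ :=
    hFc.integrable_comp_of_ae_mem isCompact_Icc measurableSet_Icc hg_meas.aemeasurable hg_mem
  have hg_int : Integrable g μ := .of_mem_Icc a b hg_meas.aemeasurable hg_mem
  obtain ⟨C, hC⟩ := isCompact_Icc.exists_bound_of_continuousOn hF'c
  have hF'g_bound : ∀ᵐ ω ∂μ, ‖deriv F (g ω)‖ ≤ C := hg_mem.mono fun ω hω ↦ hC _ hω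
  have hLq : Integrable (fun ω ↦ properLoss F (g ω) (q ω)) μ :=
    integrable_properLoss hFg hg_int integrable_condExp
      ((measurable_deriv F).comp hg_meas).aestronglyMeasurable hF'g_bound
  have h_bregR_g : ∫ ω, bregR F (q ω) (g ω) ∂μ
      = ∫ ω, properLoss F (g ω) (q ω) ∂μ + ∫ ω, F (q ω) ∂μ := by
    rw [← integral_add hLq hFq]
    congr with ω
    rw [properLoss_eq_bregR_sub, sub_add_cancel]
  rw [integral_properLoss_condExp hm hg hFg hg_int hy hF'g_bound, h_bregR_g,
    ← integral_condExp hm (f := y), integral_bregR_integral integrable_condExp hFq]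
  ring

end

theorem one_vs_rest_risk_identity_general
    {Ω 𝒳 : Type*} [MeasurableSpace Ω] [MeasurableSpace 𝒳]
    (μ : Measure Ω) [IsProbabilityMeasure μ] {k : ℕ}
    (X : Ω → 𝒳) (Y : Ω → Fin k) (i : Fin k)
    (gi : 𝒳 → ℝ)
    (hX : Measurable X) (hY : Measurable Y) (hgi : Measurable gi)
    (hgs : ∀ x, gi x ∈ Set.Icc (0 : ℝ) 1)
    (F : ℝ → ℝ)
    (hFc : ContinuousOn F (Set.Icc (0 : ℝ) 1))
    (hF'c : ContinuousOn (deriv F) (Set.Icc (0 : ℝ) 1)) :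
    ∫ ω, (-(F (gi (X ω)))
        - deriv F (gi (X ω)) * ((if Y ω = i then (1 : ℝ) else 0) - gi (X ω))) ∂μ
      = (∫ ω, bregR F
            ((μ[(fun ω' => if Y ω' = i then (1 : ℝ) else 0) |
                MeasurableSpace.comap (fun ω' => gi (X ω')) inferInstance]) ω)
            (gi (X ω)) ∂μ)
        - (∫ ω, bregR F
            ((μ[(fun ω' => if Y ω' = i then (1 : ℝ) else 0) |
                MeasurableSpace.comap (fun ω' => gi (X ω')) inferInstance]) ω)
            ((μ {ω' | Y ω' = i}).toReal) ∂μ)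
        - F ((μ {ω' | Y ω' = i}).toReal) := by
  have h_class : MeasurableSet {ω | Y ω = i} := hY (measurableSet_singleton i)
  have h_ind : (fun ω ↦ if Y ω = i then (1 : ℝ) else 0) = {ω | Y ω = i}.indicator 1 := by
    ext ω
    simp [indicator_apply]
  have h_prior : ∫ ω, (if Y ω = i then (1 : ℝ) else 0) ∂μ = (μ {ω | Y ω = i}).toReal := by
    rw [h_ind, integral_indicator_one h_class, measureReal_def]
  rw [← h_prior]
  refine integral_properLoss_eq (hgi.comp hX).comap_le hFc hF'c (comap_measurable _)
    (ae_of_all _ fun ω ↦ hgs (X ω)) ?_ (ae_of_all _ fun ω ↦ ?_)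
  · rw [h_ind]
    exact (integrable_const 1).indicator h_class
  · split_ifs <;> simp

/-- One-vs-Rest risk identity for a single class:
`R_i(g_i) = E[D_F(q_i, g_i(X))] − E[D_F(q_i, π_i)] − F(π_i)`. -/
theorem one_vs_rest_risk_identity
    {Ω 𝒳 : Type*} [MeasurableSpace Ω] [MeasurableSpace 𝒳]
    (μ : Measure Ω) [IsProbabilityMeasure μ] {k : ℕ}
    (X : Ω → 𝒳) (Y : Ω → Fin k) (i : Fin k)
    (gi : 𝒳 → ℝ)
    (hX : Measurable X) (hY : Measurable Y) (hgi : Measurable gi)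
    (hgs : ∀ x, gi x ∈ Set.Icc (0 : ℝ) 1)
    (F : ℝ → ℝ)
    (hF : ConvexOn ℝ (Set.Icc (0 : ℝ) 1) F)
    (hFd : ∀ x ∈ Set.Icc (0 : ℝ) 1, DifferentiableAt ℝ F x)
    (hFc : ContinuousOn F (Set.Icc (0 : ℝ) 1))
    (hF'c : ContinuousOn (deriv F) (Set.Icc (0 : ℝ) 1)) :
    ∫ ω, (-(F (gi (X ω)))
        - deriv F (gi (X ω)) * ((if Y ω = i then (1 : ℝ) else 0) - gi (X ω))) ∂μ
      = (∫ ω, bregR F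
            ((μ[(fun ω' => if Y ω' = i then (1 : ℝ) else 0) |
                MeasurableSpace.comap (fun ω' => gi (X ω')) inferInstance]) ω)
            (gi (X ω)) ∂μ)
        - (∫ ω, bregR F
            ((μ[(fun ω' => if Y ω' = i then (1 : ℝ) else 0) |
                MeasurableSpace.comap (fun ω' => gi (X ω')) inferInstance]) ω)
            ((μ {ω' | Y ω' = i}).toReal) ∂μ)
        - F ((μ {ω' | Y ω' = i}).toReal) :=
  one_vs_rest_risk_identity_general μ X Y i gi hX hY hgi hgs F hFc hF'c
end

section
/- One-vs-Rest risk decomposition into class-wise calibration and sharpness: with binary proper loss L(p,y) = −F(p) − F'(p)(y − p), measurable binary classifiers g_1, …, g_k : 𝒳 → [0,1], q_i := E[1{Y=i} | g_i(X)], and π_i := μ(Y = i), the mean One-vs-Rest risk satisfies (1/k) Σ_{i=1}^k E[L(g_i(X), 1{Y=i})] = (1/k) Σ_{i=1}^k (−F(π_i)) + CWCE_F(g_1,…,g_k) − SHARP_F(g_1,…,g_k), where CWCE_F(g_1,…,g_k) = (1/k) Σ_{i=1}^k E[D_F(q_i, g_i(X))] and SHARP_F(g_1,…,g_k) = (1/k)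 Σ_{i=1}^k E[D_F(q_i, π_i)]. -/
open MeasureTheory ProbabilityTheory

noncomputable def clampR (x : ℝ) : ℝ := max 0 (min x 1)

lemma clampR_mem (x : ℝ) : clampR x ∈ Set.Icc (0:ℝ) 1 :=
  ⟨le_max_left _ _, max_le (by norm_num) (min_le_right _ _)⟩

lemma clampR_eq {x : ℝ} (hx : x ∈ Set.Icc (0:ℝ) 1) : clampR x = x := by
  simp [clampR, min_eq_left hx.2, max_eq_right hx.1]

lemma clampR_continuous : Continuous clampR :=
  continuous_const.max (continuous_id.min continuous_const)

lemma int_of_bdd {Ω : Type*} [MeasurableSpace Ω] {μ : Measure Ω}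
    [IsProbabilityMeasure μ] {h : Ω → ℝ} (hmeas : AEStronglyMeasurable h μ)
    {C : ℝ} (hb : ∀ᵐ ω ∂μ, |h ω| ≤ C) : Integrable h μ :=
  Integrable.mono' (integrable_const C) hmeas (by simpa [Real.norm_eq_abs] using hb)

lemma per_class {Ω : Type*} (m : MeasurableSpace Ω) [mΩ : MeasurableSpace Ω]
    (μ : Measure Ω) [IsProbabilityMeasure μ] (hm : m ≤ mΩ)
    (p f : Ω → ℝ) (hp : Measurable p) (hpm : Measurable[m] p) (hf : Measurable f)
    (hps : ∀ ω, p ω ∈ Set.Icc (0:ℝ) 1)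
    (hf0 : ∀ ω, 0 ≤ f ω) (hf1 : ∀ ω, f ω ≤ 1)
    (F : ℝ → ℝ)
    (hFc : ContinuousOn F (Set.Icc (0:ℝ) 1))
    (hF'c : ContinuousOn (deriv F) (Set.Icc (0:ℝ) 1)) :
    ∫ ω, (-(F (p ω)) - deriv F (p ω) * (f ω - p ω)) ∂μ
      = -(F (∫ ω, f ω ∂μ))
        + ∫ ω, (F ((μ[f | m]) ω)
            - F (p ω) - deriv F (p ω)
              * ((μ[f | m]) ω - p ω)) ∂μ
        - ∫ ω, (F ((μ[f | m]) ω)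
            - F (∫ ω', f ω' ∂μ) - deriv F (∫ ω', f ω' ∂μ)
              * ((μ[f | m]) ω - ∫ ω', f ω' ∂μ)) ∂μ := by
  set q : Ω → ℝ := μ[f | m] with hq_def
  set π : ℝ := ∫ ω, f ω ∂μ with hπ_def
  have hf_int : Integrable f μ := int_of_bdd hf.aestronglyMeasurable
    (Filter.Eventually.of_forall fun ω => abs_le.mpr ⟨by linarith [hf0 ω], hf1 ω⟩)
  have hq_int : Integrable q μ := integrable_condExp
  have hq0 : 0 ≤ᵐ[μ] q := condExp_nonneg (Filter.Eventually.of_forall hf0)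
  have hq1 : q ≤ᵐ[μ] fun _ => (1:ℝ) := by
    have h1 : q ≤ᵐ[μ] μ[(fun _ => (1:ℝ)) | m] :=
      condExp_mono hf_int (integrable_const 1) (Filter.Eventually.of_forall hf1)
    rwa [condExp_const hm] at h1
  have hq01 : ∀ᵐ ω ∂μ, q ω ∈ Set.Icc (0:ℝ) 1 := by
    filter_upwards [hq0, hq1] with ω h0 h1
    exact ⟨h0, h1⟩
  have hπ01 : π ∈ Set.Icc (0:ℝ) 1 := by
    constructor
    · exact integral_nonneg hf0
    · calc π ≤ ∫ _, (1:ℝ) ∂μ := integral_mono hf_int (integrable_const 1) hf1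
        _ = 1 := by simp
  -- clamped versions
  have hFc_cont : Continuous (fun x => F (clampR x)) :=
    hFc.comp_continuous clampR_continuous clampR_mem
  have hGc_cont : Continuous (fun x => deriv F (clampR x)) :=
    hF'c.comp_continuous clampR_continuous clampR_mem
  obtain ⟨CF, hCF⟩ := (isCompact_Icc (a := (0:ℝ)) (b := 1)).exists_bound_of_continuousOn hFc
  obtain ⟨CG, hCG⟩ := (isCompact_Icc (a := (0:ℝ)) (b := 1)).exists_bound_of_continuousOn hF'c
  have hCG0 : 0 ≤ CG := le_trans (norm_nonneg _) (hCG 0 ⟨le_rfl, zero_le_one⟩)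
  have hq_sm : StronglyMeasurable q := stronglyMeasurable_condExp.mono hm
  -- integrability of the pieces
  have hFp : Integrable (fun ω => F (clampR (p ω))) μ :=
    int_of_bdd (hFc_cont.measurable.comp hp).aestronglyMeasurable
      (Filter.Eventually.of_forall fun ω => by
        simpa [Real.norm_eq_abs] using hCF _ (clampR_mem (p ω)))
  have hFq : Integrable (fun ω => F (clampR (q ω))) μ :=
    int_of_bdd (hFc_cont.comp_stronglyMeasurable hq_sm).aestronglyMeasurable
      (Filter.Eventually.of_forall fun ω => by
        simpa [Real.norm_eq_abs] using hCF _ (clampR_mem (q ω)))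
  have hGpb : ∀ ω, |deriv F (clampR (p ω))| ≤ CG := fun ω => by
    simpa [Real.norm_eq_abs] using hCG _ (clampR_mem (p ω))
  have hGp_meas : AEStronglyMeasurable (fun ω => deriv F (clampR (p ω))) μ :=
    (hGc_cont.measurable.comp hp).aestronglyMeasurable
  have hGp_f : Integrable (fun ω => deriv F (clampR (p ω)) * f ω) μ :=
    int_of_bdd (hGp_meas.mul hf.aestronglyMeasurable)
      (C := CG) (Filter.Eventually.of_forall fun ω => by
        rw [abs_mul]
        calc |deriv F (clampR (p ω))| * |f ω| ≤ CG * 1 := by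
              apply mul_le_mul (hGpb ω) (abs_le.mpr ⟨by linarith [hf0 ω], hf1 ω⟩)
                (abs_nonneg _) hCG0
          _ = CG := mul_one _)
  have hGp_p : Integrable (fun ω => deriv F (clampR (p ω)) * p ω) μ :=
    int_of_bdd (hGp_meas.mul hp.aestronglyMeasurable)
      (C := CG) (Filter.Eventually.of_forall fun ω => by
        rw [abs_mul]
        calc |deriv F (clampR (p ω))| * |p ω| ≤ CG * 1 := by
              apply mul_le_mul (hGpb ω)
                (abs_le.mpr ⟨by linarith [(hps ω).1], (hps ω).2⟩) (abs_nonneg _) hCG0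
          _ = CG := mul_one _)
  have hGp_q : Integrable (fun ω => deriv F (clampR (p ω)) * q ω) μ :=
    int_of_bdd (hGp_meas.mul hq_sm.aestronglyMeasurable)
      (C := CG) (by
        filter_upwards [hq01] with ω hω
        rw [abs_mul]
        calc |deriv F (clampR (p ω))| * |q ω| ≤ CG * 1 := by
              apply mul_le_mul (hGpb ω)
                (abs_le.mpr ⟨by linarith [hω.1], hω.2⟩) (abs_nonneg _) hCG0
          _ = CG := mul_one _)
  -- key integral identities
  have hintq : ∫ ω, q ω ∂μ = π := integral_condExp hm
  have hpull : ∫ ω, deriv F (clampR (p ω)) * q ω ∂μ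
      = ∫ ω, deriv F (clampR (p ω)) * f ω ∂μ := by
    have hGm : StronglyMeasurable[m] (fun ω => deriv F (clampR (p ω))) :=
      (hGc_cont.measurable.comp hpm).stronglyMeasurable
    have hmul : μ[(fun ω => deriv F (clampR (p ω))) * f | m]
        =ᵐ[μ] (fun ω => deriv F (clampR (p ω))) * q :=
      condExp_mul_of_stronglyMeasurable_left hGm hGp_f hf_int
    calc ∫ ω, deriv F (clampR (p ω)) * q ω ∂μ
        = ∫ ω, (μ[(fun ω => deriv F (clampR (p ω))) * f | m]) ω ∂μ :=
          (integral_congr_ae hmul).symm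
      _ = ∫ ω, ((fun ω => deriv F (clampR (p ω))) * f) ω ∂μ := integral_condExp hm
      _ = ∫ ω, deriv F (clampR (p ω)) * f ω ∂μ := rfl
  -- rewrite each of the three integrals
  have hLHS : ∫ ω, (-(F (p ω)) - deriv F (p ω) * (f ω - p ω)) ∂μ
      = -(∫ ω, F (clampR (p ω)) ∂μ) - (∫ ω, deriv F (clampR (p ω)) * f ω ∂μ)
        + ∫ ω, deriv F (clampR (p ω)) * p ω ∂μ := by
    rw [show (fun ω => -(F (p ω)) - deriv F (p ω) * (f ω - p ω))
        = fun ω => (-(F (clampR (p ω))) - deriv F (clampR (p ω)) * f ω)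
          + deriv F (clampR (p ω)) * p ω from funext fun ω => by
        rw [clampR_eq (hps ω)]; ring]
    have hFpneg : Integrable (fun ω => -(F (clampR (p ω)))) μ := hFp.neg
    have hA : Integrable (fun ω => -(F (clampR (p ω))) - deriv F (clampR (p ω)) * f ω) μ :=
      hFpneg.sub hGp_f
    rw [integral_add hA hGp_p, integral_sub hFpneg hGp_f, integral_neg]
  have hB1 : ∫ ω, (F (q ω) - F (p ω) - deriv F (p ω) * (q ω - p ω)) ∂μ
      = (∫ ω, F (clampR (q ω)) ∂μ) - (∫ ω, F (clampR (p ω)) ∂μ)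
        - ((∫ ω, deriv F (clampR (p ω)) * q ω ∂μ)
          - ∫ ω, deriv F (clampR (p ω)) * p ω ∂μ) := by
    have hcongr : (fun ω => F (q ω) - F (p ω) - deriv F (p ω) * (q ω - p ω)) =ᵐ[μ]
        fun ω => F (clampR (q ω)) - F (clampR (p ω))
          - (deriv F (clampR (p ω)) * q ω - deriv F (clampR (p ω)) * p ω) := by
      filter_upwards [hq01] with ω hω
      rw [clampR_eq (hps ω), clampR_eq hω]; ring
    have h1 : Integrable (fun ω => F (clampR (q ω)) - F (clampR (p ω))) μ := hFq.sub hFp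
    have h2 : Integrable (fun ω =>
        deriv F (clampR (p ω)) * q ω - deriv F (clampR (p ω)) * p ω) μ := hGp_q.sub hGp_p
    rw [integral_congr_ae hcongr, integral_sub h1 h2, integral_sub hFq hFp,
      integral_sub hGp_q hGp_p]
  have hB2 : ∫ ω, (F (q ω) - F π - deriv F π * (q ω - π)) ∂μ
      = (∫ ω, F (clampR (q ω)) ∂μ) - F π := by
    have hcongr : (fun ω => F (q ω) - F π - deriv F π * (q ω - π)) =ᵐ[μ]
        fun ω => F (clampR (q ω)) - F π - deriv F π * (q ω - π) := by
      filter_upwards [hq01] with ω hω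
      rw [clampR_eq hω]
    have h3 : Integrable (fun ω => F (clampR (q ω)) - F π) μ := hFq.sub (integrable_const _)
    have h4 : Integrable (fun ω => deriv F π * (q ω - π)) μ :=
      ((hq_int.sub (integrable_const π)).const_mul (deriv F π))
    have h5 : Integrable (fun ω => q ω - π) μ := hq_int.sub (integrable_const π)
    rw [integral_congr_ae hcongr, integral_sub h3 h4,
      integral_sub hFq (integrable_const (F π)), integral_const_mul (deriv F π) _,
      integral_sub hq_int (integrable_const π), hintq]
    simp
  rw [hLHS, hB1, hB2, hpull]
  ring

private theorem one_vs_rest_aux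
    {Ω 𝒳 : Type*} [MeasurableSpace Ω] [MeasurableSpace 𝒳]
    (μ : Measure Ω) [IsProbabilityMeasure μ] {k : ℕ}
    (X : Ω → 𝒳) (Y : Ω → Fin k)
    (g : Fin k → 𝒳 → ℝ)
    (hX : Measurable X) (hY : Measurable Y) (hg : ∀ i, Measurable (g i))
    (hgs : ∀ i, ∀ x, g i x ∈ Set.Icc (0 : ℝ) 1)
    (F : ℝ → ℝ)
    (hF : ConvexOn ℝ (Set.Icc (0 : ℝ) 1) F)
    (hFd : ∀ x ∈ Set.Icc (0 : ℝ) 1, DifferentiableAt ℝ F x)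
    (hFc : ContinuousOn F (Set.Icc (0 : ℝ) 1))
    (hF'c : ContinuousOn (deriv F) (Set.Icc (0 : ℝ) 1)) :
    (1 / (k : ℝ)) * ∑ i : Fin k,
        ∫ ω, (-(F (g i (X ω)))
            - deriv F (g i (X ω)) * ((if Y ω = i then (1 : ℝ) else 0) - g i (X ω))) ∂μ
      = (1 / (k : ℝ)) * (∑ i : Fin k, -(F ((μ {ω' | Y ω' = i}).toReal)))
        + (1 / (k : ℝ)) * (∑ i : Fin k,
            ∫ ω, (F ((μ[(fun ω' => if Y ω' = i then (1 : ℝ) else 0) |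
                  MeasurableSpace.comap (fun ω' => g i (X ω')) inferInstance]) ω)
              - F (g i (X ω)) - deriv F (g i (X ω)) *
                (((μ[(fun ω' => if Y ω' = i then (1 : ℝ) else 0) |
                  MeasurableSpace.comap (fun ω' => g i (X ω')) inferInstance]) ω) - g i (X ω))) ∂μ)
        - (1 / (k : ℝ)) * (∑ i : Fin k,
            ∫ ω, (F ((μ[(fun ω' => if Y ω' = i then (1 : ℝ) else 0) |
                  MeasurableSpace.comap (fun ω' => g i (X ω')) inferInstance]) ω)
              - F ((μ {ω' | Y ω' = i}).toReal) - deriv F ((μ {ω' | Y ω' = i}).toReal) *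
                (((μ[(fun ω' => if Y ω' = i then (1 : ℝ) else 0) |
                  MeasurableSpace.comap (fun ω' => g i (X ω')) inferInstance]) ω)
                  - (μ {ω' | Y ω' = i}).toReal)) ∂μ) := by
  have hπ : ∀ i : Fin k, ∫ ω, (if Y ω = i then (1:ℝ) else 0) ∂μ
      = (μ {ω' | Y ω' = i}).toReal := by
    intro i
    have hs : MeasurableSet {ω' | Y ω' = i} := hY (measurableSet_singleton i)
    rw [show (fun ω => if Y ω = i then (1:ℝ) else 0)
        = Set.indicator {ω' | Y ω' = i} (fun _ => (1:ℝ)) from funext fun ω => by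
          simp [Set.indicator_apply, Set.mem_setOf_eq]]
    exact integral_indicator_one hs
  have key : ∀ i : Fin k,
      ∫ ω, (-(F (g i (X ω)))
          - deriv F (g i (X ω)) * ((if Y ω = i then (1 : ℝ) else 0) - g i (X ω))) ∂μ
      = -(F ((μ {ω' | Y ω' = i}).toReal))
        + ∫ ω, (F ((μ[(fun ω' => if Y ω' = i then (1 : ℝ) else 0) |
              MeasurableSpace.comap (fun ω' => g i (X ω')) inferInstance]) ω)
          - F (g i (X ω)) - deriv F (g i (X ω)) *
            (((μ[(fun ω' => if Y ω' = i then (1 : ℝ) else 0) |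
              MeasurableSpace.comap (fun ω' => g i (X ω')) inferInstance]) ω) - g i (X ω))) ∂μ
        - ∫ ω, (F ((μ[(fun ω' => if Y ω' = i then (1 : ℝ) else 0) |
              MeasurableSpace.comap (fun ω' => g i (X ω')) inferInstance]) ω)
          - F ((μ {ω' | Y ω' = i}).toReal) - deriv F ((μ {ω' | Y ω' = i}).toReal) *
            (((μ[(fun ω' => if Y ω' = i then (1 : ℝ) else 0) |
              MeasurableSpace.comap (fun ω' => g i (X ω')) inferInstance]) ω)
              - (μ {ω' | Y ω' = i}).toReal)) ∂μ := by
    intro i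
    have hpmeas : Measurable (fun ω' => g i (X ω')) := (hg i).comp hX
    have hfmeas : Measurable (fun ω' => if Y ω' = i then (1:ℝ) else 0) :=
      Measurable.ite (hY (measurableSet_singleton i)) measurable_const measurable_const
    have h := per_class (MeasurableSpace.comap (fun ω' => g i (X ω')) inferInstance) μ
      hpmeas.comap_le (fun ω' => g i (X ω')) (fun ω' => if Y ω' = i then (1:ℝ) else 0)
      hpmeas (Measurable.of_comap_le le_rfl) hfmeas (fun ω => hgs i (X ω))
      (fun ω => by by_cases h : Y ω = i <;> simp [h]) (fun ω => by by_cases h : Y ω = i <;> simp [h])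
      F hFc hF'c
    rw [hπ i] at h
    exact h
  simp only [key]
  rw [Finset.sum_sub_distrib, Finset.sum_add_distrib]
  ring

/-- One-vs-Rest risk decomposition into class-wise calibration and
sharpness:
`(1/k) Σ_i R_i(g_i) = (1/k) Σ_i (−F(π_i)) + CWCE_F(g_1,…,g_k) − SHARP_F(g_1,…,g_k)`. -/
theorem one_vs_rest_risk_decomposition
    {Ω 𝒳 : Type*} [MeasurableSpace Ω] [MeasurableSpace 𝒳]
    (μ : Measure Ω) [IsProbabilityMeasure μ] {k : ℕ}
    (X : Ω → 𝒳) (Y : Ω → Fin k)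
    (g : Fin k → 𝒳 → ℝ)
    (hX : Measurable X) (hY : Measurable Y) (hg : ∀ i, Measurable (g i))
    (hgs : ∀ i, ∀ x, g i x ∈ Set.Icc (0 : ℝ) 1)
    (F : ℝ → ℝ)
    (hF : ConvexOn ℝ (Set.Icc (0 : ℝ) 1) F)
    (hFd : ∀ x ∈ Set.Icc (0 : ℝ) 1, DifferentiableAt ℝ F x)
    (hFc : ContinuousOn F (Set.Icc (0 : ℝ) 1))
    (hF'c : ContinuousOn (deriv F) (Set.Icc (0 : ℝ) 1)) :
    (1 / (k : ℝ)) * ∑ i : Fin k,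
        ∫ ω, (-(F (g i (X ω)))
            - deriv F (g i (X ω)) * ((if Y ω = i then (1 : ℝ) else 0) - g i (X ω))) ∂μ
      = (1 / (k : ℝ)) * (∑ i : Fin k, -(F ((μ {ω' | Y ω' = i}).toReal)))
        + (1 / (k : ℝ)) * (∑ i : Fin k,
            ∫ ω, bregR F
              ((μ[(fun ω' => if Y ω' = i then (1 : ℝ) else 0) |
                  MeasurableSpace.comap (fun ω' => g i (X ω')) inferInstance]) ω)
              (g i (X ω)) ∂μ)
        - (1 / (k : ℝ)) * (∑ i : Fin k,
            ∫ ω, bregR F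
              ((μ[(fun ω' => if Y ω' = i then (1 : ℝ) else 0) |
                  MeasurableSpace.comap (fun ω' => g i (X ω')) inferInstance]) ω)
              ((μ {ω' | Y ω' = i}).toReal) ∂μ) := by
  simp only [bregR]
  exact one_vs_rest_aux μ X Y g hX hY hg hgs F hF hFd hFc hF'c
end
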